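/- arXiv:math/0405512 — 3 statements merged into one kernel-verified Lean document; each statement's English description precedes it below -/
import Mathlib

section
/- For every real number γ with 0 ≤ γ ≤ α, one has β·γ^ℓ + (1−γ)^ℓ ≥ β; consequently β equals the minimum of β·γ^ℓ + (1−γ)^ℓ over γ ∈ [0, α] (the minimum being attained at γ = α). -/
theorem stmt2 (l : ℕ) (hl : 2 ≤ l)
    (α β : ℝ) (hα0 : 0 < α) (hα1 : α < 1)
    (hroot : (l : ℝ) * α ^ (l+1) - ((l : ℝ)+1) * α + 1 = 0)
    (hβ : β = (l : ℝ) * α * (1 - α) ^ (l-1)) :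
    (∀ γ : ℝ, 0 ≤ γ → γ ≤ α → β ≤ β * γ ^ l + (1 - γ) ^ l) ∧
    β * α ^ l + (1 - α) ^ l = β := by
  obtain ⟨m, rfl⟩ : ∃ m, l = m + 1 := ⟨l - 1, by omega⟩
  simp only [Nat.add_sub_cancel] at hβ
  push_cast at hroot hβ
  have h1α : (0:ℝ) ≤ 1 - α := by linarith
  -- key: (m+1) * α * α^m ≤ 1
  have hgeom : ((m:ℝ)+1) * α * (∑ i ∈ Finset.range (m+1), α ^ i) = 1 := by
    have h1 : ((m:ℝ)+1) * α * (α ^ (m+1) - 1) = α - 1 := by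
      have hp : α ^ (m+1+1) = α ^ (m+1) * α := by ring
      nlinarith [hroot]
    have h2 := geom_sum_mul α (m+1)
    have hne : α - 1 ≠ 0 := by intro h; linarith
    have h3 : (((m:ℝ)+1) * α * (∑ i ∈ Finset.range (m+1), α ^ i) - 1) * (α - 1) = 0 := by
      have expand : (((m:ℝ)+1) * α * (∑ i ∈ Finset.range (m+1), α ^ i) - 1) * (α - 1)
          = ((m:ℝ)+1) * α * ((∑ i ∈ Finset.range (m+1), α ^ i) * (α - 1)) - (α - 1) := by
        ring
      rw [expand, h2, h1]; ring
    rcases mul_eq_zero.mp h3 with h | h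
    · linarith
    · exact absurd h hne
  have hsum_ge : α ^ m ≤ ∑ i ∈ Finset.range (m+1), α ^ i := by
    apply Finset.single_le_sum (f := fun i => α ^ i) (fun i _ => by positivity)
    simp
  have hkey : ((m:ℝ)+1) * α * α ^ m ≤ 1 := by
    calc ((m:ℝ)+1) * α * α ^ m
        ≤ ((m:ℝ)+1) * α * ∑ i ∈ Finset.range (m+1), α ^ i := by
          apply mul_le_mul_of_nonneg_left hsum_ge; positivity
      _ = 1 := hgeom
  have hβ0 : 0 ≤ β := by rw [hβ]; positivity
  -- equality at α
  have heq : β * α ^ (m+1) + (1 - α) ^ (m+1) = β := by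
    have hfac : β * α ^ (m+1) + (1 - α) ^ (m+1) - β
        = (1-α)^m * (((m:ℝ)+1) * α ^ (m+1+1) - (((m:ℝ)+1)+1) * α + 1) := by
      rw [hβ]; ring
    rw [hroot, mul_zero] at hfac
    linarith
  refine ⟨?_, heq⟩
  set g : ℝ → ℝ := fun x => β * x ^ (m+1) + (1 - x) ^ (m+1) with hg
  have hderiv : ∀ x : ℝ, HasDerivAt g
      (((m:ℝ)+1) * (β * x ^ m - (1 - x) ^ m)) x := by
    intro x
    have h1 : HasDerivAt (fun x : ℝ => x ^ (m+1)) (((m:ℝ)+1) * x ^ m) x := by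
      simpa using hasDerivAt_pow (m+1) x
    have hc : HasDerivAt (fun x : ℝ => 1 - x) (-1) x := by
      simpa using ((hasDerivAt_id x).const_sub (1:ℝ))
    have h2 : HasDerivAt (fun x : ℝ => (1 - x) ^ (m+1))
        (-(((m:ℝ)+1) * (1 - x) ^ m)) x := by
      have := (hasDerivAt_pow (m+1) (1 - x)).comp x hc
      simpa [Function.comp_def] using this
    have := (h1.const_mul β).add h2
    refine this.congr_deriv ?_
    push_cast
    ring
  have hanti : AntitoneOn g (Set.Icc 0 α) := by
    apply antitoneOn_of_deriv_nonpos (convex_Icc 0 α)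
    · exact Continuous.continuousOn (by fun_prop)
    · intro x hx
      exact (hderiv x).differentiableAt.differentiableWithinAt
    · intro x hx
      rw [interior_Icc] at hx
      rw [(hderiv x).deriv]
      have hx0 : 0 < x := hx.1
      have hxα : x < α := hx.2
      have hb1 : β * x ^ m ≤ β * α ^ m :=
        mul_le_mul_of_nonneg_left (pow_le_pow_left₀ hx0.le hxα.le m) hβ0
      have hb2 : β * α ^ m ≤ (1 - α) ^ m := by
        rw [hβ]
        calc ((m:ℝ)+1) * α * (1-α) ^ m * α ^ m
            = (((m:ℝ)+1) * α * α ^ m) * (1-α) ^ m := by ring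
          _ ≤ 1 * (1-α) ^ m := mul_le_mul_of_nonneg_right hkey (by positivity)
          _ = (1-α) ^ m := one_mul _
      have hb3 : (1 - α) ^ m ≤ (1 - x) ^ m :=
        pow_le_pow_left₀ (by linarith) (by linarith) m
      nlinarith [hb1, hb2, hb3]
  intro γ hγ0 hγα
  have h := hanti (Set.mem_Icc.mpr ⟨hγ0, hγα⟩) (Set.mem_Icc.mpr ⟨hα0.le, le_refl α⟩) hγα
  simp only [hg] at h
  linarith [heq, h]
end

section
/- For all integers ℓ ≥ 2, β ≤ (1 − 1/ℓ)^{ℓ−1} and (1 − 1/ℓ)^{ℓ−1} ≤ 1/2. -/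
lemma aux_amgm (n : ℕ) (δ : ℝ) (h : -1 ≤ δ) : (1 - n * δ) * (1 + δ) ^ n ≤ 1 := by
  induction n with
  | zero => simp
  | succ n ih =>
    have h1 : (0:ℝ) ≤ 1 + δ := by linarith
    have heq : (1 - ((n:ℝ)+1) * δ) * (1 + δ) ^ (n+1)
        = ((1 - ((n:ℝ)+1) * δ) * (1 + δ)) * (1 + δ) ^ n := by ring
    push_cast
    rw [heq]
    have h2 : (1 - ((n:ℝ)+1) * δ) * (1 + δ) ≤ 1 - n * δ := by nlinarith [sq_nonneg δ]
    calc ((1 - ((n:ℝ)+1) * δ) * (1 + δ)) * (1 + δ) ^ n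
        ≤ (1 - n * δ) * (1 + δ) ^ n :=
          mul_le_mul_of_nonneg_right h2 (pow_nonneg h1 n)
      _ ≤ 1 := ih

theorem stmt3 (l : ℕ) (hl : 2 ≤ l)
    (α β : ℝ) (hα0 : 0 < α) (hα1 : α < 1)
    (hroot : (l : ℝ) * α ^ (l+1) - ((l : ℝ)+1) * α + 1 = 0)
    (hβ : β = (l : ℝ) * α * (1 - α) ^ (l-1)) :
    β ≤ (1 - 1 / (l : ℝ)) ^ (l-1) ∧ (1 - 1 / (l : ℝ)) ^ (l-1) ≤ 1 / 2 := by
  have hl2 : (2:ℝ) ≤ (l:ℝ) := by exact_mod_cast hl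
  have hl0 : (0:ℝ) < (l:ℝ) := by linarith
  have hl1 : (0:ℝ) < (l:ℝ) - 1 := by linarith
  set n := l - 1 with hn
  have hncast : (n:ℝ) = (l:ℝ) - 1 := by
    rw [hn, Nat.cast_sub (by omega)]; norm_num
  have hc : (0:ℝ) < 1 - 1/(l:ℝ) := by
    rw [sub_pos, div_lt_one hl0]; linarith
  constructor
  · -- first part
    set c : ℝ := 1 - 1/(l:ℝ) with hcdef
    set δ : ℝ := (1 - α)/c - 1 with hδ
    have hδge : -1 ≤ δ := by
      have : 0 ≤ (1 - α)/c := div_nonneg (by linarith) hc.le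
      simp only [hδ]; linarith
    have key := aux_amgm n δ hδge
    have h1pδ : 1 + δ = (1 - α)/c := by simp [hδ]
    have hcval : c = ((l:ℝ) - 1)/(l:ℝ) := by
      field_simp [hcdef]
      rw [hcdef, sub_mul, one_div, inv_mul_cancel₀ hl0.ne']; ring
    have hδval : δ = (1 - (l:ℝ)*α)/((l:ℝ) - 1) := by
      rw [hδ, hcval]
      field_simp
      ring
    have hnδ : 1 - (n:ℝ)*δ = (l:ℝ)*α := by
      rw [hδval, hncast]
      field_simp
      ring
    rw [hnδ, h1pδ, div_pow] at key
    have hcn : (0:ℝ) < c ^ n := pow_pos hc n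
    rw [hβ]
    calc (l:ℝ) * α * (1 - α)^n = ((l:ℝ)*α * ((1-α)^n / c^n)) * c^n := by
          field_simp
      _ ≤ 1 * c^n := by
          apply mul_le_mul_of_nonneg_right _ hcn.le
          rw [← mul_div_assoc] at key ⊢
          exact key
      _ = c^n := one_mul _
  · -- second part
    have hber : (2:ℝ) ≤ (1 + 1/((l:ℝ)-1)) ^ n := by
      have hpos : (0:ℝ) < 1/((l:ℝ)-1) := by positivity
      have h := one_add_mul_le_pow (a := 1/((l:ℝ)-1)) (by linarith) n
      have h2 : 1 + (n:ℝ) * (1/((l:ℝ)-1)) = 2 := by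
        rw [hncast]; rw [one_div, mul_inv_cancel₀ (by linarith : (l:ℝ)-1 ≠ 0)]; norm_num
      linarith
    have hinv : (1 - 1/(l:ℝ)) = (1 + 1/((l:ℝ)-1))⁻¹ := by
      rw [inv_eq_one_div]
      field_simp
      ring
    rw [hinv, inv_pow]
    rw [inv_le_comm₀ (by positivity) (by norm_num)]
    calc (1/2 : ℝ)⁻¹ = 2 := by norm_num
      _ ≤ _ := hber
end

section
/- For all integers k ≥ 1 and n > ℓ, if k_n = k then n ≤ (ℓ+1)k + ℓ − 1. (Equivalently, the largest n with k_n = k is at most (ℓ+1)k + ℓ − 1.) -/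
/-- The pattern 1(ℓ+1)ℓ⋯2 written 0-indexed: position 0 holds the smallest
value, and the values strictly decrease over positions 1,…,ℓ. -/
def patn (l : ℕ) : Fin (l+1) → ℕ := fun i => if i = 0 then 0 else l + 1 - (i : ℕ)

/-- The number of copies of the pattern 1(ℓ+1)ℓ⋯2 in the permutation `p` of
`{0,…,n-1}`: the number of strictly increasing index sequences along which the
values of `p` are ordered like the pattern. -/
noncomputable def copies (l n : ℕ) (p : Equiv.Perm (Fin n)) : ℕ :=
  Set.ncard {f : Fin (l+1) → Fin n | StrictMono f ∧
    ∀ a b : Fin (l+1), patn l a < patn l b ↔ p (f a) < p (f b)}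

/-- `M l n` is the maximum number of copies of the pattern 1(ℓ+1)ℓ⋯2 over all
permutations of an `n`-element set (and `M l 0 = 0`). -/
noncomputable def M (l n : ℕ) : ℕ :=
  sSup {m | ∃ p : Equiv.Perm (Fin n), copies l n p = m}

/-- `kn l n` is the largest `k` with `1 ≤ k < n` maximizing
`M l k + k * C(n-k, l)`. -/
noncomputable def kn (l n : ℕ) : ℕ :=
  sSup {k | 1 ≤ k ∧ k < n ∧ ∀ j : ℕ, 1 ≤ j → j < n →
    M l j + j * Nat.choose (n - j) l ≤ M l k + k * Nat.choose (n - k) l}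

/-!
If `n ≥ (ℓ+1)k + ℓ`, then passing from `k` to `k+1` does not decrease the objective
`M_k + k·C(n-k, ℓ)`: `M` is monotone (extend an optimal permutation by a new largest last
value), and `k·C(m, ℓ) ≤ (k+1)·C(m-1, ℓ)` as soon as `(k+1)ℓ ≤ m`, because
`C(m, ℓ)·(m-ℓ) = m·C(m-1, ℓ)`. So `k+1` would be a larger maximizer, contradicting the
choice of `k_n` as the largest one.
-/

open Equiv

lemma copies_le_copies {l k m : ℕ} (p : Perm (Fin k)) (q : Perm (Fin m)) {e : Fin k → Fin m}
    (he : StrictMono e) (hpq : ∀ i j, q (e i) < q (e j) ↔ p i < p j) :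
    copies l k p ≤ copies l m q := by
  refine Set.ncard_le_ncard_of_injOn (e ∘ ·) ?_ ?_ (Set.toFinite _)
  · rintro f ⟨hf, hpat⟩
    exact ⟨he.comp hf, fun a b => (hpat a b).trans (hpq _ _).symm⟩
  · intro f _ g _ hfg
    funext i
    exact he.injective (congrFun hfg i)

lemma bddAbove_copies (l n : ℕ) : BddAbove {m | ∃ p : Perm (Fin n), copies l n p = m} :=
  (Set.finite_range (copies l n)).bddAbove

lemma copies_le_M (l n : ℕ) (p : Perm (Fin n)) : copies l n p ≤ M l n :=
  le_csSup (bddAbove_copies l n) ⟨p, rfl⟩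

lemma exists_copies_eq_M (l n : ℕ) : ∃ p : Perm (Fin n), copies l n p = M l n :=
  Nat.sSup_mem (Set.range_nonempty (copies l n)) (bddAbove_copies l n)

lemma M_le_M_succ (l k : ℕ) : M l k ≤ M l (k + 1) := by
  obtain ⟨p, hp⟩ := exists_copies_eq_M l k
  let q : Perm (Fin (k + 1)) := permCongr finSuccEquivLast.symm p.optionCongr
  have hq : ∀ i, q i.castSucc = (p i).castSucc := fun i => by
    simp [q, permCongr_apply]
  calc M l k = copies l k p := hp.symm
    _ ≤ copies l (k + 1) q :=
      copies_le_copies p q Fin.strictMono_castSucc fun i j => by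
        simp only [hq, Fin.castSucc_lt_castSucc_iff]
    _ ≤ M l (k + 1) := copies_le_M l (k + 1) q

lemma mul_choose_le_succ_mul_choose_pred {k l m : ℕ} (h : (k + 1) * l ≤ m) :
    k * m.choose l ≤ (k + 1) * (m - 1).choose l := by
  rcases m with _ | m
  · obtain rfl : l = 0 := by simpa using h
    simp
  have hl : l ≤ m + 1 := le_trans (Nat.le_mul_of_pos_left l k.succ_pos) h
  have hmul : k * (m + 1) ≤ (k + 1) * (m + 1 - l) := by
    zify [hl]
    nlinarith
  refine Nat.le_of_mul_le_mul_right ?_ m.succ_pos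
  calc k * (m + 1).choose l * (m + 1) = (m + 1).choose l * (k * (m + 1)) := by ring
    _ ≤ (m + 1).choose l * ((k + 1) * (m + 1 - l)) := Nat.mul_le_mul_left _ hmul
    _ = (k + 1) * ((m + 1).choose l * (m + 1 - l)) := by ring
    _ = (k + 1) * (m + 1 - 1).choose l * (m + 1) := by
      rw [← Nat.choose_mul_succ_eq, Nat.add_sub_cancel, mul_assoc]

/-- The condition on `k` in the definition of `kn l n`. -/
def IsMaximizer (l n k : ℕ) : Prop :=
  1 ≤ k ∧ k < n ∧ ∀ j : ℕ, 1 ≤ j → j < n →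
    M l j + j * Nat.choose (n - j) l ≤ M l k + k * Nat.choose (n - k) l

lemma le_kn {l n k : ℕ} (hk : IsMaximizer l n k) : k ≤ kn l n :=
  le_csSup ⟨n, fun _ hj => hj.2.1.le⟩ hk

lemma isMaximizer_kn {l n : ℕ} (h : 1 ≤ kn l n) : IsMaximizer l n (kn l n) := by
  change 1 ≤ sSup {k | IsMaximizer l n k} at h
  obtain hemp | hne := {k | IsMaximizer l n k}.eq_empty_or_nonempty
  · rw [hemp, csSup_empty] at h
    exact absurd h (by simp)
  · exact Nat.sSup_mem hne ⟨n, fun _ hj => hj.2.1.le⟩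

lemma IsMaximizer.succ {l n k : ℕ} (hk : IsMaximizer l n k) (hl : 1 ≤ l)
    (hn : (l + 1) * k + l ≤ n) : IsMaximizer l n (k + 1) := by
  obtain ⟨hk1, -, hmax⟩ := hk
  have hkn : (k + 1) * l + k ≤ n := by linarith [show (k + 1) * l + k = (l + 1) * k + l by ring]
  have hstep : M l k + k * (n - k).choose l ≤ M l (k + 1) + (k + 1) * (n - (k + 1)).choose l := by
    rw [Nat.sub_add_eq]
    exact Nat.add_le_add (M_le_M_succ l k)
      (mul_choose_le_succ_mul_choose_pred (Nat.le_sub_of_add_le hkn))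
  exact ⟨by omega, by nlinarith, fun j hj1 hj2 => (hmax j hj1 hj2).trans hstep⟩

theorem stmt7_general (l : ℕ) (hl : 2 ≤ l) (k n : ℕ) (hk : 1 ≤ k)
    (h : kn l n = k) :
    n ≤ (l+1) * k + l - 1 := by
  subst h
  by_contra hcon
  have hsucc := (isMaximizer_kn hk).succ (by omega) (by omega)
  have := le_kn hsucc
  omega

theorem stmt7 (l : ℕ) (hl : 2 ≤ l) (k n : ℕ) (hk : 1 ≤ k) (hn : l < n)
    (h : kn l n = k) :
    n ≤ (l+1) * k + l - 1 :=
  stmt7_general l hl k n hk h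
end
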